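/- Consider a finite MDP and run Anc-VI with coefficients λ_k ∈ [0,1) for k ≥ 1 and the convention λ_0 = 1, starting from V^0, where for each i ≥ 0, π_i is a greedy policy for V^i. Then for every k ≥ 0, V^k = ∑_{i=0}^{k} (∏_{j=i+1}^{k} (1−λ_j)) λ_i (P^{π_{k−1}} P^{π_{k−2}} ⋯ P^{π_i}) V^0 + ∑_{i=0}^{k−1} (∏_{j=i+1}^{k} (1−λ_j)) (P^{π_{k−1}} ⋯ P^{π_{i+1}}) r^{π_i}, where an empty matrix product is the identity (in particular the i = k term of the first sum is λ_k V^0). -/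

import Mathlib

open Finset Filter

noncomputable section

/-- A finite Markov decision process: a transition kernel `P` assigning to each
state-action pair a probability distribution over states, and a reward `r`. -/
structure FinMDP (S A : Type) [Fintype S] [Fintype A] where
  P : S → A → S → ℝ
  r : S → A → ℝ
  P_nonneg : ∀ s a s', 0 ≤ P s a s'
  P_sum_one : ∀ s a, ∑ s', P s a s' = 1

variable {S A : Type} [Fintype S] [Nonempty S] [Fintype A] [Nonempty A]

/-- The transition operator `P^π` induced by a deterministic policy `π`. -/
def Pop (M : FinMDP S A) (p : S → A) (V : S → ℝ) : S → ℝ :=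
  fun s => ∑ s', M.P s (p s) s' * V s'

/-- The reward vector `r^π` induced by a deterministic policy `π`. -/
def rPol (M : FinMDP S A) (p : S → A) : S → ℝ := fun s => M.r s (p s)

/-- The Bellman optimality operator `T`. -/
def bellman (M : FinMDP S A) (V : S → ℝ) : S → ℝ :=
  fun s => Finset.univ.sup' Finset.univ_nonempty
    (fun a => M.r s a + ∑ s', M.P s a s' * V s')

/-- A deterministic policy `π` is greedy for `V` if `r^π + P^π V = T V`. -/
def IsGreedy (M : FinMDP S A) (p : S → A) (V : S → ℝ) : Prop :=
  rPol M p + Pop M p V = bellman M V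

/-- `(g, h)` is a solution of the modified Bellman equations:
`max_π P^π g = g`, `max_π (r^π + P^π h) = h + g` (entrywise maxima over
deterministic policies, equivalently over actions), and some deterministic
policy attains both maxima simultaneously. -/
def IsMBESolution (M : FinMDP S A) (g h : S → ℝ) : Prop :=
  (∀ s, (Finset.univ.sup' Finset.univ_nonempty
      fun a => ∑ s', M.P s a s' * g s') = g s) ∧
  (∀ s, bellman M h s = h s + g s) ∧
  (∃ p : S → A, Pop M p g = g ∧ rPol M p + Pop M p h = h + g)

/-- The average reward `g^π(s) = liminf_{T→∞} (1/T) ∑_{t<T} ((P^π)^t r^π)(s)`. -/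
def avgReward (M : FinMDP S A) (p : S → A) : S → ℝ :=
  fun s => Filter.liminf
    (fun T : ℕ => (1 / (T : ℝ)) * ∑ t ∈ Finset.range T, ((Pop M p)^[t] (rPol M p)) s)
    Filter.atTop

/-- `prodApply ops j k v = ops (k-1) (ops (k-2) (⋯ (ops j v)))`, the descending
product of operators `ops (k-1), …, ops j` applied to `v`; it is `v` when `k ≤ j`
(the empty product is the identity). -/
def prodApply (ops : ℕ → (S → ℝ) → (S → ℝ)) (j : ℕ) : ℕ → (S → ℝ) → (S → ℝ)
  | 0, v => v
  | k + 1, v => if j ≤ k then ops k (prodApply ops j k v) else v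

lemma Pop_add (M : FinMDP S A) (p : S → A) (u v : S → ℝ) :
    Pop M p (u + v) = Pop M p u + Pop M p v := by
  funext s; simp [Pop, mul_add, Finset.sum_add_distrib]

lemma Pop_smul (M : FinMDP S A) (p : S → A) (c : ℝ) (v : S → ℝ) :
    Pop M p (c • v) = c • Pop M p v := by
  funext s
  simp only [Pop, Pi.smul_apply, smul_eq_mul, Finset.mul_sum]
  exact Finset.sum_congr rfl (fun _ _ => by ring)

lemma Pop_sum {ι : Type*} (M : FinMDP S A) (p : S → A) (t : Finset ι) (f : ι → S → ℝ) :
    Pop M p (∑ i ∈ t, f i) = ∑ i ∈ t, Pop M p (f i) := by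
  classical
  induction t using Finset.induction_on with
  | empty => funext s; simp [Pop]
  | insert a s h ih => rw [Finset.sum_insert h, Pop_add, ih, Finset.sum_insert h]

lemma prodApply_succ_of_le (ops : ℕ → (S → ℝ) → (S → ℝ)) {j k : ℕ} (h : j ≤ k) (v : S → ℝ) :
    prodApply ops j (k + 1) v = ops k (prodApply ops j k v) := by
  simp [prodApply, h]

lemma prodApply_of_le (ops : ℕ → (S → ℝ) → (S → ℝ)) {j k : ℕ} (h : k ≤ j) (v : S → ℝ) :
    prodApply ops j k v = v := by
  cases k with
  | zero => rfl
  | succ m => simp [prodApply, show ¬ j ≤ m by omega]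

set_option maxHeartbeats 1000000 in
/-- Lemma (Anc-VI expansion): with the convention `λ_0 = 1`,
`V^k = ∑_{i=0}^k (∏_{j=i+1}^k (1−λ_j)) λ_i (P^{π_{k−1}}⋯P^{π_i}) V^0
      + ∑_{i=0}^{k−1} (∏_{j=i+1}^k (1−λ_j)) (P^{π_{k−1}}⋯P^{π_{i+1}}) r^{π_i}`. -/
theorem ancvi_expansion
    (M : FinMDP S A)
    (lam : ℕ → ℝ) (hlam0 : lam 0 = 1)
    (hlam : ∀ j : ℕ, 1 ≤ j → lam j ∈ Set.Ico (0 : ℝ) 1)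
    (V : ℕ → S → ℝ) (pol : ℕ → S → A)
    (hV : ∀ k : ℕ, V (k + 1) = lam (k + 1) • V 0 + (1 - lam (k + 1)) • bellman M (V k))
    (hpol : ∀ i : ℕ, IsGreedy M (pol i) (V i)) :
    ∀ k : ℕ,
      V k = (∑ i ∈ Finset.range (k + 1),
              ((∏ j ∈ Finset.Icc (i + 1) k, (1 - lam j)) * lam i) •
                prodApply (fun l => Pop M (pol l)) i k (V 0))
            + ∑ i ∈ Finset.range k,
                (∏ j ∈ Finset.Icc (i + 1) k, (1 - lam j)) •
                  prodApply (fun l => Pop M (pol l)) (i + 1) k (rPol M (pol i)) := by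
  intro k
  induction k with
  | zero =>
    simp [prodApply, hlam0]
  | succ k ih =>
    have hgreedy : bellman M (V k) = rPol M (pol k) + Pop M (pol k) (V k) := (hpol k).symm
    rw [hV k, hgreedy, ih]
    rw [Pop_add, Pop_sum, Pop_sum]
    conv_rhs =>
      congr
      · rw [Finset.sum_range_succ, prodApply_of_le _ (le_refl (k+1)),
          show Finset.Icc (k + 1 + 1) (k + 1) = ∅ from Finset.Icc_eq_empty (by omega),
          Finset.prod_empty]
      · rw [Finset.sum_range_succ, prodApply_of_le _ (le_refl (k+1)),
          Finset.Icc_self, Finset.prod_singleton]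
    have h1 : ∀ i ∈ Finset.range (k+1),
        ((∏ j ∈ Finset.Icc (i + 1) (k+1), (1 - lam j)) * lam i) •
          prodApply (fun l => Pop M (pol l)) i (k+1) (V 0)
        = ((1 - lam (k+1)) * ((∏ j ∈ Finset.Icc (i + 1) k, (1 - lam j)) * lam i)) •
            Pop M (pol k) (prodApply (fun l => Pop M (pol l)) i k (V 0)) := by
      intro i hi
      have hik : i ≤ k := by simpa [Nat.lt_succ_iff] using hi
      rw [prodApply_succ_of_le _ hik, Finset.prod_Icc_succ_top (by omega : i + 1 ≤ k + 1)]
      congr 1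
      ring
    have h2 : ∀ i ∈ Finset.range k,
        (∏ j ∈ Finset.Icc (i + 1) (k+1), (1 - lam j)) •
          prodApply (fun l => Pop M (pol l)) (i+1) (k+1) (rPol M (pol i))
        = ((1 - lam (k+1)) * (∏ j ∈ Finset.Icc (i + 1) k, (1 - lam j))) •
            Pop M (pol k) (prodApply (fun l => Pop M (pol l)) (i+1) k (rPol M (pol i))) := by
      intro i hi
      have hik : i + 1 ≤ k := by simpa [Nat.succ_le_iff] using hi
      rw [prodApply_succ_of_le _ hik, Finset.prod_Icc_succ_top (by omega : i + 1 ≤ k + 1)]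
      congr 1
      ring
    rw [Finset.sum_congr rfl h1, Finset.sum_congr rfl h2]
    simp only [Pop_smul, smul_add, Finset.smul_sum, smul_smul, one_mul]
    abel
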